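/- For every ℓ > 0, ∫₀^ℓ 1/((ℓ-k)²+1) · 1/(k²+1) dk = 2·(ℓ·arctan(ℓ) + ln(ℓ²+1)) / ((ℓ²+4)·ℓ). -/

import Mathlib

/-! The integrand has the partial fraction decomposition
`1/((l-k)²+1) · 1/(k²+1) = (k/(k²+1) - (k-l)/((k-l)²+1)) · 2/(l(l²+4)) + (1/(k²+1) + 1/((k-l)²+1)) / (l²+4)`,
so it has an elementary primitive built from `log (x²+1)` and `arctan x` and their translates by `l`;
the integral over `[0, l]` is then read off from the fundamental theorem of calculus. -/

open Real

namespace CauchyConvolution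

lemma hasDerivAt_log_sub_sq_add_one (c k : ℝ) :
    HasDerivAt (fun x => log ((x - c) ^ 2 + 1)) (2 * (k - c) / ((k - c) ^ 2 + 1)) k := by
  have h := ((((hasDerivAt_id k).sub_const c).pow 2).add_const 1).log
    (ne_of_gt (by positivity : (0:ℝ) < (k - c) ^ 2 + 1))
  simpa [div_eq_inv_mul, mul_comm] using h

lemma hasDerivAt_arctan_sub (c k : ℝ) :
    HasDerivAt (fun x => arctan (x - c)) (1 / (1 + (k - c) ^ 2)) k := by
  simpa using ((hasDerivAt_id k).sub_const c).arctan

noncomputable def primitive (l x : ℝ) : ℝ :=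
  (log (x ^ 2 + 1) - log ((x - l) ^ 2 + 1)) / (l * (l ^ 2 + 4)) +
    (arctan x + arctan (x - l)) / (l ^ 2 + 4)

lemma hasDerivAt_primitive {l : ℝ} (hl : l ≠ 0) (k : ℝ) :
    HasDerivAt (primitive l) (1 / ((l - k) ^ 2 + 1) * (1 / (k ^ 2 + 1))) k := by
  have h := (((hasDerivAt_log_sub_sq_add_one 0 k).sub
      (hasDerivAt_log_sub_sq_add_one l k)).div_const (l * (l ^ 2 + 4))).add
    (((hasDerivAt_arctan_sub 0 k).add (hasDerivAt_arctan_sub l k)).div_const (l ^ 2 + 4))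
  simp only [sub_zero] at h
  refine h.congr_deriv ?_
  field_simp
  ring

lemma primitive_sub_primitive_zero {l : ℝ} (hl : l ≠ 0) :
    primitive l l - primitive l 0 =
      2 * (l * arctan l + log (l ^ 2 + 1)) / ((l ^ 2 + 4) * l) := by
  simp only [primitive, sub_self, zero_sub, sub_zero, neg_sq, arctan_neg, arctan_zero,
    zero_pow two_ne_zero, zero_add, log_one]
  field_simp
  ring

theorem integral_eq {l : ℝ} (hl : l ≠ 0) :
    ∫ k in (0:ℝ)..l, 1 / ((l - k) ^ 2 + 1) * (1 / (k ^ 2 + 1)) =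
      2 * (l * arctan l + log (l ^ 2 + 1)) / ((l ^ 2 + 4) * l) := by
  have hcont : Continuous fun k : ℝ => 1 / ((l - k) ^ 2 + 1) * (1 / (k ^ 2 + 1)) := by
    fun_prop (disch := intro; positivity)
  rw [intervalIntegral.integral_eq_sub_of_hasDerivAt (fun k _ => hasDerivAt_primitive hl k)
    (hcont.intervalIntegrable 0 l)]
  exact primitive_sub_primitive_zero hl

end CauchyConvolution

theorem stmt_4 (l : ℝ) (hl : 0 < l) :
    ∫ k in (0:ℝ)..l, 1 / ((l - k) ^ 2 + 1) * (1 / (k ^ 2 + 1)) =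
      2 * (l * Real.arctan l + Real.log (l ^ 2 + 1)) / ((l ^ 2 + 4) * l) :=
  CauchyConvolution.integral_eq hl.ne'
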